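/- arXiv:1002.0540 — 3 statements merged into one kernel-verified Lean document; each statement's English description precedes it below -/
import Mathlib

section
/- For every s > 1/2 there exists a constant C = C(s) > 0 such that for all f, g ∈ H^s(ℝ), the pointwise product f·g again belongs to H^s(ℝ) and ‖f·g‖_{H^s} ≤ C·‖f‖_{H^s}·‖g‖_{H^s}. (Thus, for s > 1/2, H^s(ℝ) is closed under pointwise multiplication and becomes a Banach algebra upon introducing an equivalent norm.) -/
/-!
Take `H = F ⋆ G`, whose inverse Fourier transform is `f g`. Writing `⟨ξ⟩ = (1 + ξ²)^{1/2}`,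
Peetre's inequality `⟨ξ⟩^s ≲ ⟨η⟩^s + ⟨ξ - η⟩^s` bounds `⟨ξ⟩^s |H ξ|` by
`(⟨·⟩^s |F|) ⋆ |G| + |F| ⋆ (⟨·⟩^s |G|)`. Young's inequality `‖u ⋆ v‖₂ ≤ ‖u‖₂ ‖v‖₁` reduces
the `L²` norm of each term to an `Hˢ` norm times an `L¹` norm, and for `s > 1/2` Cauchy–Schwarz
against the square-integrable weight `⟨ξ⟩^{-s}` bounds `‖F‖₁` by `‖F‖_{Hˢ}`.
-/
open MeasureTheory Real FourierTransform ENNReal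

/-- `F` is the Fourier-side representative of `f` in `H^s(ℝ)`: `F` is integrable,
the weighted function `ξ ↦ (1+ξ²)^{s/2} F ξ` is in `L²`, and `f` is the inverse
Fourier(–Plancherel) transform of `F`.  For `s > 1/2` this encodes exactly
`f ∈ L²(ℝ)` with `(1+ξ²)^{s/2} (𝓕 f)(ξ) ∈ L²` (the representative being continuous). -/
def IsHsRep (s : ℝ) (F f : ℝ → ℂ) : Prop :=
  Integrable F ∧
  MemLp (fun ξ : ℝ => (((1 + ξ ^ 2) ^ (s / 2) : ℝ) : ℂ) * F ξ) 2 volume ∧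
  ∀ x : ℝ, f x = 𝓕⁻ F x

/-- The `Hˢ` norm, expressed through the Fourier-side representative `F` of `f`:
`‖f‖_{Hˢ} = ‖ξ ↦ (1+ξ²)^{s/2} F ξ‖_{L²}`. -/
noncomputable def hsNorm (s : ℝ) (F : ℝ → ℂ) : ℝ≥0∞ :=
  eLpNorm (fun ξ : ℝ => (((1 + ξ ^ 2) ^ (s / 2) : ℝ) : ℂ) * F ξ) 2 volume

open scoped Convolution

section CauchySchwarz

variable {α : Type*} [MeasurableSpace α] {μ : Measure α}

theorem sq_eLpNorm_two {ε : Type*} [ENorm ε] (f : α → ε) :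
    eLpNorm f 2 μ ^ 2 = ∫⁻ x, ‖f x‖ₑ ^ 2 ∂μ := by
  rw [eLpNorm_eq_lintegral_rpow_enorm_toReal two_ne_zero ofNat_ne_top]
  simpa using ENNReal.rpow_inv_natCast_pow two_ne_zero _

theorem lintegral_mul_le_eLpNorm_mul_eLpNorm {f g : α → ℝ≥0∞} (hf : AEMeasurable f μ)
    (hg : AEMeasurable g μ) : ∫⁻ x, f x * g x ∂μ ≤ eLpNorm f 2 μ * eLpNorm g 2 μ := by
  simpa [eLpNorm_eq_lintegral_rpow_enorm_toReal] using
    ENNReal.lintegral_mul_le_Lp_mul_Lq μ Real.HolderConjugate.two_two hf hg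

theorem sq_lintegral_mul_le {w h : α → ℝ≥0∞} (hw : AEMeasurable w μ) (hh : AEMeasurable h μ) :
    (∫⁻ x, w x * h x ∂μ) ^ 2 ≤ (∫⁻ x, w x ∂μ) * ∫⁻ x, w x * h x ^ 2 ∂μ := by
  set r : α → ℝ≥0∞ := fun x => w x ^ (2⁻¹ : ℝ)
  have hr : ∀ x, r x ^ 2 = w x := fun x => by
    simpa using ENNReal.rpow_inv_natCast_pow two_ne_zero (w x)
  have hrm : AEMeasurable r μ := hw.pow_const _
  calc (∫⁻ x, w x * h x ∂μ) ^ 2 = (∫⁻ x, r x * (r x * h x) ∂μ) ^ 2 := by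
        simp_rw [← mul_assoc, ← sq, hr]
    _ ≤ (eLpNorm r 2 μ * eLpNorm (fun x => r x * h x) 2 μ) ^ 2 := by
        gcongr; exact lintegral_mul_le_eLpNorm_mul_eLpNorm hrm (hrm.mul hh)
    _ = (∫⁻ x, w x ∂μ) * ∫⁻ x, w x * h x ^ 2 ∂μ := by
        simp_rw [mul_pow, sq_eLpNorm_two, enorm_eq_self, mul_pow, hr]

end CauchySchwarz

section Young

variable {G : Type*} [MeasurableSpace G] [AddGroup G] [MeasurableAdd₂ G] [MeasurableNeg G]
  {μ : Measure G} [μ.IsAddLeftInvariant] [SFinite μ]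

theorem eLpNorm_lconvolution_le {f g : G → ℝ≥0∞} (hf : AEMeasurable f μ) (hg : AEMeasurable g μ) :
    eLpNorm (f ⋆ₗ[μ] g) 2 μ ≤ (∫⁻ x, f x ∂μ) * eLpNorm g 2 μ := by
  rw [← ENNReal.pow_le_pow_left_iff two_ne_zero, mul_pow, sq_eLpNorm_two, sq_eLpNorm_two]
  simp only [enorm_eq_self, lconvolution_def]
  have hk : AEMeasurable (fun p : G × G => f p.2 * g (-p.2 + p.1) ^ 2) (μ.prod μ) := by
    fun_prop
  calc ∫⁻ x, (∫⁻ y, f y * g (-y + x) ∂μ) ^ 2 ∂μ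
      ≤ ∫⁻ x, (∫⁻ y, f y ∂μ) * ∫⁻ y, f y * g (-y + x) ^ 2 ∂μ ∂μ :=
        lintegral_mono fun x =>
          sq_lintegral_mul_le hf (by fun_prop : AEMeasurable (fun y => g (-y + x)) μ)
    _ = (∫⁻ y, f y ∂μ) * ∫⁻ y, f y * ∫⁻ x, g (-y + x) ^ 2 ∂μ ∂μ := by
        rw [lintegral_const_mul'' _ hk.lintegral_prod_right', lintegral_lintegral_swap hk]
        congr 1
        refine lintegral_congr fun y => ?_
        have hgy : AEMeasurable (fun x => g (-y + x) ^ 2) μ :=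
          (hg.comp_quasiMeasurePreserving
            (measurePreserving_add_left μ (-y)).quasiMeasurePreserving).pow_const 2
        exact lintegral_const_mul'' (f y) hgy
    _ = (∫⁻ y, f y ∂μ) ^ 2 * ∫⁻ x, g x ^ 2 ∂μ := by
        simp_rw [lintegral_add_left_eq_self (fun x => g x ^ 2)]
        rw [lintegral_mul_const'' _ hf, sq, mul_assoc]

end Young

theorem one_add_sq_rpow_le_mul_add {t : ℝ} (ht : 0 ≤ t) (ξ η : ℝ) :
    (1 + ξ ^ 2) ^ t ≤ 4 ^ t * ((1 + η ^ 2) ^ t + (1 + (ξ - η) ^ 2) ^ t) := by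
  set a := 1 + η ^ 2
  set b := 1 + (ξ - η) ^ 2
  have hmax : 1 + ξ ^ 2 ≤ 4 * max a b := by
    nlinarith [le_max_left a b, le_max_right a b, sq_nonneg (ξ - 2 * η)]
  calc (1 + ξ ^ 2) ^ t ≤ (4 * max a b) ^ t := by gcongr
    _ = 4 ^ t * max a b ^ t := Real.mul_rpow (by norm_num) (by positivity)
    _ ≤ 4 ^ t * (a ^ t + b ^ t) := by
        gcongr
        rcases max_choice a b with h | h <;> rw [h]
        exacts [le_add_of_nonneg_right (by positivity), le_add_of_nonneg_left (by positivity)]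

noncomputable def hsWeight (s ξ : ℝ) : ℝ≥0∞ := ENNReal.ofReal ((1 + ξ ^ 2) ^ (s / 2))

@[fun_prop]
theorem measurable_hsWeight (s : ℝ) : Measurable (hsWeight s) := by
  unfold hsWeight; fun_prop

theorem hsWeight_neg_mul_hsWeight (s ξ : ℝ) : hsWeight (-s) ξ * hsWeight s ξ = 1 := by
  rw [hsWeight, hsWeight, ← ENNReal.ofReal_mul (by positivity), ← Real.rpow_add (by positivity),
    neg_div, neg_add_cancel, Real.rpow_zero, ENNReal.ofReal_one]

theorem hsWeight_le_mul_add {s : ℝ} (hs : 0 ≤ s) (ξ η : ℝ) :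
    hsWeight s ξ ≤ ENNReal.ofReal (4 ^ (s / 2)) * (hsWeight s η + hsWeight s (ξ - η)) := by
  rw [hsWeight, hsWeight, hsWeight, ← ENNReal.ofReal_add (by positivity) (by positivity),
    ← ENNReal.ofReal_mul (by positivity)]
  exact ENNReal.ofReal_le_ofReal (one_add_sq_rpow_le_mul_add (by positivity) ξ η)

theorem hsNorm_eq_eLpNorm (s : ℝ) (F : ℝ → ℂ) :
    hsNorm s F = eLpNorm (fun ξ => hsWeight s ξ * ‖F ξ‖ₑ) 2 volume := by
  refine eLpNorm_congr_enorm_ae (ae_of_all _ fun ξ => ?_)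
  rw [enorm_mul, enorm_eq_self, hsWeight, ← ofReal_norm, Complex.norm_real,
    Real.norm_of_nonneg (by positivity)]

theorem lintegral_le_eLpNorm_hsWeight_mul (s : ℝ) {φ : ℝ → ℝ≥0∞} (hφ : AEMeasurable φ) :
    ∫⁻ ξ, φ ξ ≤
      eLpNorm (hsWeight (-s)) 2 volume * eLpNorm (fun ξ => hsWeight s ξ * φ ξ) 2 volume := by
  calc ∫⁻ ξ, φ ξ = ∫⁻ ξ, hsWeight (-s) ξ * (hsWeight s ξ * φ ξ) := by
        simp_rw [← mul_assoc, hsWeight_neg_mul_hsWeight, one_mul]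
    _ ≤ _ := lintegral_mul_le_eLpNorm_mul_eLpNorm (by fun_prop) (by fun_prop)

theorem eLpNorm_hsWeight_neg_lt_top {s : ℝ} (hs : 1 / 2 < s) :
    eLpNorm (hsWeight (-s)) 2 volume < ⊤ := by
  have hint := integrable_rpow_neg_one_add_norm_sq (E := ℝ) (μ := volume) (r := 2 * s)
    (by simp; linarith)
  have hsq : eLpNorm (hsWeight (-s)) 2 volume ^ 2 < ⊤ := by
    rw [sq_eLpNorm_two]
    convert hasFiniteIntegral_iff_enorm.1 hint.hasFiniteIntegral using 2
    funext ξ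
    rw [enorm_eq_self, hsWeight, Real.enorm_of_nonneg (by positivity),
      ← ENNReal.ofReal_pow (by positivity), ← Real.rpow_mul_natCast (by positivity),
      Real.norm_eq_abs, sq_abs]
    ring_nf
  simpa using hsq

open ContinuousLinearMap in
theorem hsWeight_mul_enorm_convolution_le {s : ℝ} (hs : 0 ≤ s) {F G : ℝ → ℂ}
    (hF : AEStronglyMeasurable F) (hG : AEStronglyMeasurable G) (ξ : ℝ) :
    hsWeight s ξ * ‖(F ⋆[mul ℂ ℂ] G) ξ‖ₑ ≤ ENNReal.ofReal (4 ^ (s / 2)) *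
      (((fun η => hsWeight s η * ‖F η‖ₑ) ⋆ₗ fun η => ‖G η‖ₑ) ξ +
        ((fun η => ‖F η‖ₑ) ⋆ₗ fun η => hsWeight s η * ‖G η‖ₑ) ξ) := by
  simp only [lconvolution_def, neg_add_eq_sub]
  have hGξ : AEMeasurable (fun η => ‖G (ξ - η)‖ₑ) :=
    hG.enorm.comp_quasiMeasurePreserving (quasiMeasurePreserving_sub_left_of_right_invariant _ ξ)
  calc hsWeight s ξ * ‖(F ⋆[mul ℂ ℂ] G) ξ‖ₑ
      ≤ hsWeight s ξ * ∫⁻ η, ‖F η‖ₑ * ‖G (ξ - η)‖ₑ := by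
        gcongr
        simpa [convolution_def] using enorm_integral_le_lintegral_enorm (fun η => F η * G (ξ - η))
    _ = ∫⁻ η, hsWeight s ξ * (‖F η‖ₑ * ‖G (ξ - η)‖ₑ) :=
        (lintegral_const_mul' _ _ ofReal_ne_top).symm
    _ ≤ ∫⁻ η, ENNReal.ofReal (4 ^ (s / 2)) * (hsWeight s η + hsWeight s (ξ - η)) *
          (‖F η‖ₑ * ‖G (ξ - η)‖ₑ) := by
        gcongr with η
        exact hsWeight_le_mul_add hs ξ η
    _ = ∫⁻ η, ENNReal.ofReal (4 ^ (s / 2)) * (hsWeight s η * ‖F η‖ₑ * ‖G (ξ - η)‖ₑ +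
          ‖F η‖ₑ * (hsWeight s (ξ - η) * ‖G (ξ - η)‖ₑ)) := lintegral_congr fun η => by ring
    _ = ENNReal.ofReal (4 ^ (s / 2)) * ((∫⁻ η, hsWeight s η * ‖F η‖ₑ * ‖G (ξ - η)‖ₑ) +
          ∫⁻ η, ‖F η‖ₑ * (hsWeight s (ξ - η) * ‖G (ξ - η)‖ₑ)) := by
        rw [lintegral_const_mul' _ _ ofReal_ne_top, lintegral_add_left' (by fun_prop)]

open ContinuousLinearMap in
theorem hsNorm_convolution_le {s : ℝ} (hs : 0 ≤ s) {F G : ℝ → ℂ}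
    (hF : AEStronglyMeasurable F) (hG : AEStronglyMeasurable G) :
    hsNorm s (F ⋆[mul ℂ ℂ] G) ≤ 2 * ENNReal.ofReal (4 ^ (s / 2)) *
      eLpNorm (hsWeight (-s)) 2 volume * hsNorm s F * hsNorm s G := by
  set φ : ℝ → ℝ≥0∞ := fun η => ‖F η‖ₑ
  set ψ : ℝ → ℝ≥0∞ := fun η => ‖G η‖ₑ
  set Wφ : ℝ → ℝ≥0∞ := fun η => hsWeight s η * φ η
  set Wψ : ℝ → ℝ≥0∞ := fun η => hsWeight s η * ψ η
  set c := ENNReal.ofReal (4 ^ (s / 2))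
  set K := eLpNorm (hsWeight (-s)) 2 volume
  have hφ : AEMeasurable φ := hF.enorm
  have hψ : AEMeasurable ψ := hG.enorm
  have hWφ : AEMeasurable Wφ := by fun_prop
  have hWψ : AEMeasurable Wψ := by fun_prop
  rw [hsNorm_eq_eLpNorm, hsNorm_eq_eLpNorm, hsNorm_eq_eLpNorm]
  calc eLpNorm (fun ξ => hsWeight s ξ * ‖(F ⋆[mul ℂ ℂ] G) ξ‖ₑ) 2 volume
      ≤ c * eLpNorm (ψ ⋆ₗ Wφ + φ ⋆ₗ Wψ) 2 volume := by
        refine eLpNorm_le_mul_eLpNorm_of_ae_le_mul'' _ ((aemeasurable_lconvolution hψ hWφ).add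
          (aemeasurable_lconvolution hφ hWψ)).aestronglyMeasurable (ae_of_all _ fun ξ => ?_)
        rw [enorm_eq_self, enorm_eq_self, lconvolution_comm (f := ψ)]
        exact hsWeight_mul_enorm_convolution_le hs hF hG ξ
    _ ≤ c * (eLpNorm (ψ ⋆ₗ Wφ) 2 volume + eLpNorm (φ ⋆ₗ Wψ) 2 volume) := by
        gcongr
        exact eLpNorm_add_le (aemeasurable_lconvolution hψ hWφ).aestronglyMeasurable
          (aemeasurable_lconvolution hφ hWψ).aestronglyMeasurable one_le_two
    _ ≤ c * ((∫⁻ η, ψ η) * eLpNorm Wφ 2 volume + (∫⁻ η, φ η) * eLpNorm Wψ 2 volume) := by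
        gcongr
        exacts [eLpNorm_lconvolution_le hψ hWφ, eLpNorm_lconvolution_le hφ hWψ]
    _ ≤ c * (K * eLpNorm Wψ 2 volume * eLpNorm Wφ 2 volume +
          K * eLpNorm Wφ 2 volume * eLpNorm Wψ 2 volume) := by
        gcongr
        exacts [lintegral_le_eLpNorm_hsWeight_mul s hψ, lintegral_le_eLpNorm_hsWeight_mul s hφ]
    _ = 2 * c * K * eLpNorm Wφ 2 volume * eLpNorm Wψ 2 volume := by ring

section Fourier

variable {V : Type*} [NormedAddCommGroup V] [InnerProductSpace ℝ V] [FiniteDimensional ℝ V]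
  [MeasurableSpace V] [BorelSpace V]

open ContinuousLinearMap in
theorem fourierInv_mul_convolution_eq {F G : V → ℂ} (hF : Integrable F) (hG : Integrable G)
    (x : V) : 𝓕⁻ (F ⋆[mul ℂ ℂ] G) x = 𝓕⁻ F x * 𝓕⁻ G x := by
  simp only [Real.fourierInv_eq_fourier_neg, Real.fourier_mul_convolution_eq hF hG]

theorem MemLp.fourierInv_mul {F : V → ℂ} (hF : Integrable F) {g : V → ℂ} {p : ℝ≥0∞}
    {μ : Measure V} (hg : MemLp g p μ) : MemLp (fun x => 𝓕⁻ F x * g x) p μ := by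
  have hbdd : MemLp (𝓕⁻ F) ∞ μ :=
    Real.Lp.fourierTransformInv_toLp (memLp_one_iff_integrable.2 hF) ▸
      BoundedContinuousFunction.memLp_top _
  exact hg.mul hbdd

end Fourier

open ContinuousLinearMap in
theorem IsHsRep.convolution {s : ℝ} (hs : 1 / 2 < s) {F G f g : ℝ → ℂ} (hF : IsHsRep s F f)
    (hG : IsHsRep s G g) : IsHsRep s (F ⋆[mul ℂ ℂ] G) (fun x => f x * g x) := by
  obtain ⟨hF₁, hFs, hf⟩ := hF
  obtain ⟨hG₁, hGs, hg⟩ := hG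
  have hH₁ : Integrable (F ⋆[mul ℂ ℂ] G) := hF₁.integrable_convolution _ hG₁
  refine ⟨hH₁, ⟨?_, ?_⟩, fun x => by
    simp only [hf, hg, fourierInv_mul_convolution_eq hF₁ hG₁]⟩
  · have hweight : Measurable fun ξ : ℝ => (((1 + ξ ^ 2) ^ (s / 2) : ℝ) : ℂ) := by fun_prop
    exact hweight.aestronglyMeasurable.mul hH₁.aestronglyMeasurable
  · refine (hsNorm_convolution_le (by linarith) hF₁.1 hG₁.1).trans_lt ?_
    have hK := eLpNorm_hsWeight_neg_lt_top hs
    have hFn : hsNorm s F < ⊤ := hFs.2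
    have hGn : hsNorm s G < ⊤ := hGs.2
    finiteness

/-- For `s > 1/2` there is `C = C(s) > 0` such that for all
`f, g ∈ Hˢ(ℝ)` the pointwise product `f·g` is again in `Hˢ(ℝ)` and
`‖f·g‖_{Hˢ} ≤ C ‖f‖_{Hˢ} ‖g‖_{Hˢ}`; thus `Hˢ(ℝ)` is a Banach algebra for an
equivalent norm. -/
theorem hs_banach_algebra (s : ℝ) (hs : 1 / 2 < s) :
    ∃ C > (0 : ℝ), ∀ f g F G : ℝ → ℂ,
      MemLp f 2 volume → MemLp g 2 volume →
      IsHsRep s F f → IsHsRep s G g →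
      MemLp (fun x : ℝ => f x * g x) 2 volume ∧
      ∃ H : ℝ → ℂ, IsHsRep s H (fun x : ℝ => f x * g x) ∧
        hsNorm s H ≤ ENNReal.ofReal C * hsNorm s F * hsNorm s G := by
  set K := 2 * ENNReal.ofReal (4 ^ (s / 2)) * eLpNorm (hsWeight (-s)) 2 volume
  have hK : K ≠ ⊤ := by
    have := eLpNorm_hsWeight_neg_lt_top hs
    finiteness
  refine ⟨K.toReal + 1, by positivity, fun f g F G _ hg hF hG =>
    ⟨?_, F ⋆[ContinuousLinearMap.mul ℂ ℂ] G, hF.convolution hs hG, ?_⟩⟩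
  · obtain rfl : f = 𝓕⁻ F := funext hF.2.2
    exact MemLp.fourierInv_mul hF.1 hg
  · calc hsNorm s (F ⋆[ContinuousLinearMap.mul ℂ ℂ] G) ≤ K * hsNorm s F * hsNorm s G :=
          hsNorm_convolution_le (by linarith) hF.1.1 hG.1.1
      _ ≤ ENNReal.ofReal (K.toReal + 1) * hsNorm s F * hsNorm s G := by
          gcongr
          rw [ENNReal.ofReal_add toReal_nonneg zero_le_one, ofReal_toReal hK]
          exact le_self_add
end

section
/- Let s ≥ 0, let m ≥ 1 be an integer, let x ≥ 0, let u : ℝ → ℝ be measurable with ∫₀^∞ |u(t)| dt < ∞ and ∫₀^∞ (1+t)^{2s} |u(t)|² dt < ∞, and let φ ∈ L²(ℝ). Then ∫_{Δ_m(x)} |u(y₁)| ⋯ |u(y_m)| · (1 + y_m)^s · |φ(ζ_m(y))| dy ≤ (‖u‖_{L¹(0,∞)}^{m−1} / (m−1)!) · ‖u‖_{L^{2,s}(0,∞)} · ‖φ‖_{L²(ℝ)}, where Δ_m(x) := { y ∈ ℝ^m : x ≤ y₁ ≤ y₂ ≤ ⋯ ≤ y_m } and ζ_m(y) := Σ_{j=0}^{m−1}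 (−1)^j y_{m−j}. (Taking m = 2n this gives the bound ‖A_n(x,·)‖_{L^{2,s}} ≤ ‖u‖_{L¹}^{2n−1}/(2n−1)! · ‖u‖_{L^{2,s}} on the n-th term of the multilinear expansion of the ZS–AKNS solution entry n₁₁⁺; taking m = 2n−1 it gives the analogous bound ‖B_n(x,·)‖_{L^{2,s}} ≤ ‖u‖_{L¹}^{2n−2}/(2n−2)! · ‖u‖_{L^{2,s}} for n₂₁⁺.) -/
/-!
Peel off the last variable `t = y_m`. Since `ζ_m(y) = t - ζ_{m-1}(y₁, …, y_{m-1})`, the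
`t`-integral is `∫_{t ≥ x} |u t| (1 + t)^s |φ (t - c)| dt` for a shift `c` depending only on the
other variables, and Cauchy–Schwarz bounds it by `‖u‖_{L^{2,s}} ‖φ‖_{L²}` uniformly in `c`.
What remains is `∫ |u(y₁)| ⋯ |u(y_{m-1})|` over the ordered simplex `Δ_{m-1}(x)`, which is
`1/(m-1)!` of the same integral over the cube `[x, ∞)^{m-1}`: almost every point of the cube has
pairwise distinct coordinates, so exactly one permutation sorts it into the simplex.
-/

open MeasureTheory ENNReal Set Function

theorem LinearMap.quasiMeasurePreserving_of_surjective {E F : Type*} [NormedAddCommGroup E]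
    [NormedSpace ℝ E] [MeasurableSpace E] [BorelSpace E] [FiniteDimensional ℝ E]
    [NormedAddCommGroup F] [NormedSpace ℝ F] [MeasurableSpace F] [BorelSpace F]
    (μ : Measure E) [μ.IsAddHaarMeasure] (ν : Measure F) [ν.IsAddHaarMeasure]
    (L : E →ₗ[ℝ] F) (hL : Surjective L) : Measure.QuasiMeasurePreserving L μ ν := by
  obtain ⟨c, -, hc⟩ := L.exists_map_addHaar_eq_smul_addHaar μ ν hL
  exact ⟨L.continuous_of_finiteDimensional.measurable, hc ▸ Measure.smul_absolutelyContinuous⟩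

theorem ae_injective_pi {ι : Type*} [Fintype ι] : ∀ᵐ z : ι → ℝ, Injective z := by
  classical
  have hdiag (i j : ι) (hij : i ≠ j) : ∀ᵐ z : ι → ℝ, z i ≠ z j := by
    refine measure_mono_null (fun z hz => ?_) (Measure.addHaar_submodule volume
      (LinearMap.ker (LinearMap.proj (R := ℝ) (φ := fun _ : ι => ℝ) i - LinearMap.proj j)) ?_)
    · simpa [sub_eq_zero] using hz
    · intro htop
      have := LinearMap.congr_fun (LinearMap.ker_eq_top.mp htop) (Pi.single i 1)
      simp [hij] at this
  refine ae_all_iff.2 fun i => ae_all_iff.2 fun j => ?_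
  rcases eq_or_ne i j with rfl | hij
  · exact ae_of_all _ fun _ _ => rfl
  · filter_upwards [hdiag i j hij] with z hz h using absurd h hz

theorem lintegral_comp_perm {ι : Type*} [Fintype ι] (σ : Equiv.Perm ι)
    (h : (ι → ℝ) → ℝ≥0∞) : ∫⁻ z, h (z ∘ σ) = ∫⁻ z, h z := by
  have := (volume_measurePreserving_piCongrLeft (fun _ : ι => ℝ) σ.symm).lintegral_comp_emb
    (MeasurableEquiv.measurableEmbedding _) h
  refine (lintegral_congr fun z => congrArg h (funext fun i => ?_)).trans this
  simpa [MeasurableEquiv.coe_piCongrLeft] using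
    (Equiv.piCongrLeft_apply_apply (fun _ => ℝ) σ.symm z (σ i)).symm

theorem lintegral_mul_comp_sub_le {w g : ℝ → ℝ≥0∞} (hw : AEMeasurable w) (hg : AEMeasurable g)
    (s : Set ℝ) (c : ℝ) :
    ∫⁻ t in s, w t * g (t - c) ≤
      (∫⁻ t in s, w t ^ (2 : ℝ)) ^ (1 / 2 : ℝ) * (∫⁻ t, g t ^ (2 : ℝ)) ^ (1 / 2 : ℝ) := by
  have hg_sub : AEMeasurable (fun t => g (t - c)) :=
    hg.comp_quasiMeasurePreserving (measurePreserving_sub_right volume c).quasiMeasurePreserving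
  refine (ENNReal.lintegral_mul_le_Lp_mul_Lq _ Real.HolderConjugate.two_two hw.restrict
    hg_sub.restrict).trans ?_
  refine mul_le_mul_right (ENNReal.rpow_le_rpow ?_ (by norm_num)) _
  calc ∫⁻ t in s, g (t - c) ^ (2 : ℝ)
      ≤ ∫⁻ t, g (t - c) ^ (2 : ℝ) := setLIntegral_le_lintegral _ _
    _ = ∫⁻ t, g t ^ (2 : ℝ) := lintegral_sub_right_eq_self (fun t => g t ^ (2 : ℝ)) c

theorem setLIntegral_Ici_ofReal_le {h : ℝ → ℝ} {x : ℝ} (hx : 0 ≤ x)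
    (hh : IntegrableOn h (Ioi 0)) (hnn : ∀ t ∈ Ioi (0 : ℝ), 0 ≤ h t) :
    ∫⁻ t in Ici x, ENNReal.ofReal (h t) ≤ ENNReal.ofReal (∫ t in Ioi 0, h t) :=
  calc ∫⁻ t in Ici x, ENNReal.ofReal (h t)
      ≤ ∫⁻ t in Ici 0, ENNReal.ofReal (h t) := lintegral_mono_set (Ici_subset_Ici.2 hx)
    _ = ∫⁻ t in Ioi 0, ENNReal.ofReal (h t) := by rw [restrict_Ioi_eq_restrict_Ici]
    _ = ENNReal.ofReal (∫ t in Ioi 0, h t) :=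
        (ofReal_integral_eq_lintegral_ofReal hh
          (ae_restrict_of_forall_mem measurableSet_Ioi hnn)).symm

section Snoc

variable {α : Type*} [MeasurableSpace α] (μ : Measure α) [SigmaFinite μ]

theorem lintegral_pi_eq_lintegral_lintegral_snoc {n : ℕ} {F : (Fin (n + 1) → α) → ℝ≥0∞}
    (hF : AEMeasurable F (Measure.pi fun _ => μ)) :
    ∫⁻ y, F y ∂(Measure.pi fun _ => μ) =
      ∫⁻ z, ∫⁻ t, F (Fin.snoc z t) ∂μ ∂(Measure.pi fun _ => μ) := by
  have e := (measurePreserving_piFinSuccAbove (fun _ : Fin (n + 1) => μ) (Fin.last n)).symm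
  rw [← e.lintegral_comp_emb (MeasurableEquiv.measurableEmbedding _)]
  refine (lintegral_prod_symm (F ∘ _)
    (hF.comp_quasiMeasurePreserving e.quasiMeasurePreserving)).trans ?_
  simp [MeasurableEquiv.piFinSuccAbove_symm_apply]
  rfl

theorem lintegral_pi_prod_eq_pow {f : α → ℝ≥0∞} (hf : Measurable f) :
    ∀ n : ℕ, ∫⁻ z, ∏ i, f (z i) ∂(Measure.pi fun _ : Fin n => μ) = (∫⁻ t, f t ∂μ) ^ n
  | 0 => by simp
  | n + 1 => by
    have hP (k : ℕ) : Measurable fun z : Fin k → α => ∏ i, f (z i) :=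
      Finset.measurable_prod _ fun i _ => hf.comp (measurable_pi_apply i)
    rw [lintegral_pi_eq_lintegral_lintegral_snoc μ (hP _).aemeasurable]
    simp only [Fin.prod_univ_castSucc, Fin.snoc_castSucc, Fin.snoc_last]
    simp_rw [lintegral_const_mul _ hf]
    rw [lintegral_mul_const _ (hP n), lintegral_pi_prod_eq_pow hf n, pow_succ]

end Snoc

theorem Tuple.eq_sort_of_injective_of_monotone_comp {n : ℕ} {z : Fin n → ℝ} (hz : Injective z)
    {σ : Equiv.Perm (Fin n)} (hσ : Monotone (z ∘ σ)) : σ = Tuple.sort z :=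
  Tuple.eq_sort_iff.2 ⟨hσ, fun _ _ hij h => absurd (σ.injective (hz h)) hij.ne⟩

namespace OrderedSimplex

def simplex (n : ℕ) (x : ℝ) : Set (Fin n → ℝ) := {z | Monotone z ∧ ∀ i, x ≤ z i}

theorem measurableSet_simplex (n : ℕ) (x : ℝ) : MeasurableSet (simplex n x) := by
  simp only [simplex, Monotone, ofPred_and, ofPred_forall]
  measurability

theorem simplex_succ_eq (n : ℕ) (x : ℝ) :
    simplex (n + 1) x = {y | x ≤ y 0 ∧ Monotone y} := by
  ext y
  exact ⟨fun h => ⟨h.2 0, h.1⟩, fun h => ⟨h.2, fun i => h.1.trans (h.2 (Fin.zero_le i))⟩⟩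

theorem mem_simplex_of_snoc_mem {n : ℕ} {x t : ℝ} {z : Fin n → ℝ}
    (h : (Fin.snoc z t : Fin (n + 1) → ℝ) ∈ simplex (n + 1) x) :
    z ∈ simplex n x ∧ x ≤ t := by
  refine ⟨⟨fun i j hij => ?_, fun i => ?_⟩, ?_⟩
  · simpa using h.1 (Fin.castSucc_le_castSucc_iff.2 hij)
  · simpa using h.2 i.castSucc
  · simpa using h.2 (Fin.last n)

theorem sum_indicator_simplex_comp_perm_le {n : ℕ} (x : ℝ) {z : Fin n → ℝ} (hz : Injective z) :
    ∑ σ : Equiv.Perm (Fin n), (simplex n x).indicator 1 (z ∘ σ) ≤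
      (univ.pi fun _ => Ici x).indicator (1 : (Fin n → ℝ) → ℝ≥0∞) z := by
  rw [Finset.sum_eq_single (Tuple.sort z)]
  · by_cases h : z ∘ Tuple.sort z ∈ simplex n x
    · have hcube : z ∈ univ.pi fun _ => Ici x := fun i _ => by
        simpa using h.2 ((Tuple.sort z).symm i)
      rw [indicator_of_mem h, indicator_of_mem hcube]
      rfl
    · simp [indicator_of_notMem h]
  · intro σ _ hσ
    exact indicator_of_notMem
      (fun h => hσ (Tuple.eq_sort_of_injective_of_monotone_comp hz h.1)) _
  · exact fun h => absurd (Finset.mem_univ _) h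

theorem lintegral_simplex_prod_le {f : ℝ → ℝ≥0∞} (hf : Measurable f) (n : ℕ) (x : ℝ) :
    ∫⁻ z in simplex n x, ∏ i, f (z i) ≤ (∫⁻ t in Ici x, f t) ^ n / n.factorial := by
  set S := simplex n x
  set P : (Fin n → ℝ) → ℝ≥0∞ := fun z => ∏ i, f (z i)
  have hP : Measurable P := Finset.measurable_prod _ fun i _ => hf.comp (measurable_pi_apply i)
  have hS : MeasurableSet S := measurableSet_simplex n x
  have hP_perm (z : Fin n → ℝ) (σ : Equiv.Perm (Fin n)) : P (z ∘ σ) = P z :=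
    Equiv.prod_comp σ fun i => f (z i)
  rw [ENNReal.le_div_iff_mul_le (.inl (Nat.cast_ne_zero.2 n.factorial_ne_zero))
    (.inl (natCast_ne_top _)), mul_comm]
  calc (n.factorial : ℝ≥0∞) * ∫⁻ z in S, P z
      = ∑ σ : Equiv.Perm (Fin n), ∫⁻ z, S.indicator P (z ∘ σ) := by
        simp [lintegral_comp_perm, lintegral_indicator hS, Fintype.card_perm]
    _ = ∫⁻ z, (∑ σ : Equiv.Perm (Fin n), S.indicator 1 (z ∘ σ)) * P z := by
        rw [← lintegral_finsetSum _ (f := fun (σ : Equiv.Perm (Fin n)) z => S.indicator P (z ∘ σ))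
          fun σ _ => (hP.indicator hS).comp
            (measurable_pi_lambda _ fun i => measurable_pi_apply (σ i))]
        refine lintegral_congr fun z => ?_
        rw [Finset.sum_mul]
        refine Finset.sum_congr rfl fun σ _ => ?_
        rw [← hP_perm z σ, ← indicator_mul_left, Pi.one_def]
        simp only [one_mul]
    _ ≤ ∫⁻ z, (univ.pi fun _ => Ici x).indicator 1 z * P z := by
        refine lintegral_mono_ae ?_
        filter_upwards [ae_injective_pi] with z hz
        exact mul_le_mul_left (sum_indicator_simplex_comp_perm_le x hz) _
    _ = ∫⁻ z in univ.pi fun _ => Ici x, P z := by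
        rw [← lintegral_indicator (MeasurableSet.univ_pi fun _ => measurableSet_Ici)]
        refine lintegral_congr fun z => ?_
        rw [← indicator_mul_left, Pi.one_def]
        simp only [one_mul]
    _ = (∫⁻ t in Ici x, f t) ^ n := by
        rw [volume_pi, Measure.restrict_pi_pi, lintegral_pi_prod_eq_pow _ hf]

/-- `ζ_n(y) = y_n - y_{n-1} + ⋯ ± y_1`; with `0`-indexed coordinates, `y_{n-j}` is `y j.rev`. -/
def zeta (n : ℕ) : (Fin n → ℝ) →ₗ[ℝ] ℝ :=
  ∑ j : Fin n, (-1 : ℝ) ^ (j : ℕ) • LinearMap.proj j.rev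

theorem zeta_apply {n : ℕ} (y : Fin n → ℝ) :
    zeta n y = ∑ j : Fin n, (-1 : ℝ) ^ (j : ℕ) * y j.rev := by
  simp [zeta]

theorem zeta_snoc {n : ℕ} (z : Fin n → ℝ) (t : ℝ) :
    zeta (n + 1) (Fin.snoc z t) = t - zeta n z := by
  simp only [zeta_apply, Fin.sum_univ_succ, Fin.rev_zero, Fin.rev_succ, Fin.snoc_last,
    Fin.snoc_castSucc, Fin.val_zero, Fin.val_succ, pow_succ]
  simp [Finset.sum_neg_distrib, sub_eq_add_neg]

theorem quasiMeasurePreserving_zeta (n : ℕ) :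
    Measure.QuasiMeasurePreserving (zeta (n + 1)) :=
  (zeta (n + 1)).quasiMeasurePreserving_of_surjective _ _
    fun t => ⟨Fin.snoc 0 t, by simp [zeta_snoc]⟩

theorem lintegral_simplex_succ_le {f w g : ℝ → ℝ≥0∞} (hf : Measurable f) (hw : Measurable w)
    (hg : AEMeasurable g) {n : ℕ} {x : ℝ} {K : ℝ≥0∞}
    (hK : ∀ c, ∫⁻ t in Ici x, w t * g (t - c) ≤ K) :
    ∫⁻ y in simplex (n + 1) x,
        (∏ i : Fin n, f (y i.castSucc)) * w (y (Fin.last n)) * g (zeta (n + 1) y) ≤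
      (∫⁻ t in Ici x, f t) ^ n / n.factorial * K := by
  set F : (Fin (n + 1) → ℝ) → ℝ≥0∞ := fun y =>
    (∏ i : Fin n, f (y i.castSucc)) * w (y (Fin.last n)) * g (zeta (n + 1) y)
  set P : (Fin n → ℝ) → ℝ≥0∞ := fun z => ∏ i, f (z i)
  have hS := measurableSet_simplex (n + 1) x
  have hP : Measurable P := Finset.measurable_prod _ fun i _ => hf.comp (measurable_pi_apply i)
  have hF : AEMeasurable F := by
    refine AEMeasurable.mul (Measurable.aemeasurable ?_)
      (hg.comp_quasiMeasurePreserving (quasiMeasurePreserving_zeta n))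
    exact (Finset.measurable_prod _ fun i _ => hf.comp (measurable_pi_apply _)).mul
      (hw.comp (measurable_pi_apply _))
  have hG (c : ℝ) : AEMeasurable ((Ici x).indicator fun t => w t * g (t - c)) :=
    (hw.aemeasurable.mul (hg.comp_quasiMeasurePreserving
      (measurePreserving_sub_right volume c).quasiMeasurePreserving)).indicator measurableSet_Ici
  have hslice (z : Fin n → ℝ) (t : ℝ) :
      (simplex (n + 1) x).indicator F (Fin.snoc z t) ≤
        (simplex n x).indicator P z * (Ici x).indicator (fun t => w t * g (t - zeta n z)) t := by
    by_cases h : (Fin.snoc z t : Fin (n + 1) → ℝ) ∈ simplex (n + 1) x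
    · obtain ⟨hz, ht⟩ := mem_simplex_of_snoc_mem h
      rw [indicator_of_mem h, indicator_of_mem hz, indicator_of_mem (mem_Ici.2 ht)]
      simp [F, P, zeta_snoc, mul_assoc]
    · simp [indicator_of_notMem h]
  calc ∫⁻ y in simplex (n + 1) x, F y
      = ∫⁻ y, (simplex (n + 1) x).indicator F y := (lintegral_indicator hS F).symm
    _ = ∫⁻ z, ∫⁻ t, (simplex (n + 1) x).indicator F (Fin.snoc z t) :=
        lintegral_pi_eq_lintegral_lintegral_snoc volume (hF.indicator hS)
    _ ≤ ∫⁻ z, (simplex n x).indicator P z * ∫⁻ t in Ici x, w t * g (t - zeta n z) := by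
        refine lintegral_mono fun z => ?_
        rw [← lintegral_indicator measurableSet_Ici, ← lintegral_const_mul'' _ (hG _)]
        exact lintegral_mono (hslice z)
    _ ≤ ∫⁻ z, (simplex n x).indicator P z * K := by gcongr with z; exact hK _
    _ = (∫⁻ z in simplex n x, P z) * K := by
        rw [lintegral_mul_const _ (hP.indicator (measurableSet_simplex n x)),
          lintegral_indicator (measurableSet_simplex n x)]
    _ ≤ (∫⁻ t in Ici x, f t) ^ n / n.factorial * K :=
        mul_le_mul_left (lintegral_simplex_prod_le hf n x) K

theorem lintegral_simplex_weighted_le (s : ℝ) {u : ℝ → ℝ} (hu : Measurable u) {φ : ℝ → ℂ}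
    (hφ : AEMeasurable φ) (n : ℕ) (x : ℝ) :
    ∫⁻ y in simplex (n + 1) x,
        ENNReal.ofReal ((∏ i, |u (y i)|) * (1 + y (Fin.last n)) ^ s * ‖φ (zeta (n + 1) y)‖) ≤
      (∫⁻ t in Ici x, ENNReal.ofReal |u t|) ^ n / n.factorial *
        ((∫⁻ t in Ici x, ENNReal.ofReal (|u t| * (1 + t) ^ s) ^ (2 : ℝ)) ^ (1 / 2 : ℝ) *
          (∫⁻ t, ENNReal.ofReal ‖φ t‖ ^ (2 : ℝ)) ^ (1 / 2 : ℝ)) := by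
  have hg : AEMeasurable fun t => ENNReal.ofReal ‖φ t‖ := hφ.norm.ennreal_ofReal
  refine le_of_eq_of_le (lintegral_congr fun y => ?_) (lintegral_simplex_succ_le
    (by fun_prop) (by fun_prop) hg fun c => lintegral_mul_comp_sub_le (by fun_prop) hg _ c)
  rw [ENNReal.ofReal_mul' (norm_nonneg _), Fin.prod_univ_castSucc, mul_assoc _ |u _|,
    ENNReal.ofReal_mul (by positivity), ENNReal.ofReal_prod_of_nonneg fun _ _ => abs_nonneg _]

end OrderedSimplex

theorem setLIntegral_Ici_ofReal_mul_rpow_sq_le {u : ℝ → ℝ} {s x : ℝ} (hx : 0 ≤ x)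
    (hu : IntegrableOn (fun t => (1 + t) ^ (2 * s) * u t ^ 2) (Ioi 0)) :
    ∫⁻ t in Ici x, ENNReal.ofReal (|u t| * (1 + t) ^ s) ^ (2 : ℝ) ≤
      ENNReal.ofReal (∫ t in Ioi 0, (1 + t) ^ (2 * s) * u t ^ 2) := by
  refine le_of_eq_of_le (setLIntegral_congr_fun measurableSet_Ici fun t ht => ?_)
    (setLIntegral_Ici_ofReal_le hx hu fun t ht => ?_)
  · have h1t : 0 ≤ 1 + t := by linarith [mem_Ici.1 ht]
    rw [ENNReal.rpow_two, ← ENNReal.ofReal_pow (by positivity), mul_pow, sq_abs,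
      ← Real.rpow_mul_natCast h1t, mul_comm (u t ^ 2), Nat.cast_ofNat, mul_comm s]
  · exact mul_nonneg (Real.rpow_nonneg (by linarith [mem_Ioi.1 ht]) _) (sq_nonneg _)

theorem MeasureTheory.MemLp.lintegral_ofReal_norm_rpow_two {α E : Type*} [MeasurableSpace α]
    {μ : Measure α} [NormedAddCommGroup E] {φ : α → E} (hφ : MemLp φ 2 μ) :
    ∫⁻ t, ENNReal.ofReal ‖φ t‖ ^ (2 : ℝ) ∂μ = ENNReal.ofReal (∫ t, ‖φ t‖ ^ 2 ∂μ) := by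
  rw [ofReal_integral_eq_lintegral_ofReal (hφ.integrable_norm_pow two_ne_zero)
    (ae_of_all _ fun t => by positivity)]
  simp_rw [ENNReal.rpow_two, ENNReal.ofReal_pow (norm_nonneg _)]

theorem pow_div_factorial_mul_sqrt_mul_sqrt_le_ofReal {A B C : ℝ≥0∞} {a b c : ℝ} (n : ℕ)
    (ha : 0 ≤ a) (hb : 0 ≤ b) (hc : 0 ≤ c) (hA : A ≤ ENNReal.ofReal a)
    (hB : B ≤ ENNReal.ofReal b) (hC : C ≤ ENNReal.ofReal c) :
    A ^ n / n.factorial * (B ^ (1 / 2 : ℝ) * C ^ (1 / 2 : ℝ)) ≤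
      ENNReal.ofReal (a ^ n / n.factorial * b ^ ((1 : ℝ) / 2) * c ^ ((1 : ℝ) / 2)) := by
  rw [ENNReal.ofReal_mul (by positivity), ENNReal.ofReal_mul (by positivity),
    ENNReal.ofReal_div_of_pos (by positivity), ENNReal.ofReal_pow ha, ENNReal.ofReal_natCast,
    ← ENNReal.ofReal_rpow_of_nonneg hb (by norm_num),
    ← ENNReal.ofReal_rpow_of_nonneg hc (by norm_num), mul_assoc]
  gcongr

/-- The basic weighted estimate on the simplex integrals arising in
the multilinear expansion of the ZS–AKNS Jost solutions: for `s ≥ 0`, `m ≥ 1`, `x ≥ 0`,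
`u` with `u ∈ L¹(0,∞)` and `u ∈ L^{2,s}(0,∞)`, and `φ ∈ L²(ℝ)`,

`∫_{Δ_m(x)} |u(y₁)|⋯|u(y_m)| (1+y_m)^s |φ(ζ_m(y))| dy
    ≤ (‖u‖_{L¹(0,∞)}^{m−1}/(m−1)!) ‖u‖_{L^{2,s}(0,∞)} ‖φ‖_{L²(ℝ)}`,

where `Δ_m(x) = {x ≤ y₁ ≤ ⋯ ≤ y_m}` and `ζ_m(y) = Σ_{j=0}^{m−1} (−1)^j y_{m−j}`
(0-indexed: `y_{m-j} = y (Fin.rev j)`). -/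
theorem simplex_weighted_bound (s : ℝ) (m : ℕ) (hm : 1 ≤ m)
    (x : ℝ) (hx : 0 ≤ x) (u : ℝ → ℝ) (hu : Measurable u)
    (hu1 : IntegrableOn u (Set.Ioi (0 : ℝ)))
    (hu2 : IntegrableOn (fun t : ℝ => (1 + t) ^ (2 * s) * u t ^ 2) (Set.Ioi (0 : ℝ)))
    (φ : ℝ → ℂ) (hφ : MemLp φ 2 volume) :
    (∫⁻ y in {y : Fin m → ℝ | x ≤ y ⟨0, by omega⟩ ∧ Monotone y},
        ENNReal.ofReal ((∏ i : Fin m, |u (y i)|) * (1 + y ⟨m - 1, by omega⟩) ^ s *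
          ‖φ (∑ j : Fin m, (-1 : ℝ) ^ (j : ℕ) * y j.rev)‖))
      ≤ ENNReal.ofReal
          (((∫ t in Set.Ioi (0 : ℝ), |u t|) ^ (m - 1) / (Nat.factorial (m - 1) : ℝ)) *
            (∫ t in Set.Ioi (0 : ℝ), (1 + t) ^ (2 * s) * u t ^ 2) ^ ((1 : ℝ) / 2) *
            (∫ t : ℝ, ‖φ t‖ ^ 2) ^ ((1 : ℝ) / 2)) := by
  obtain ⟨n, rfl⟩ : ∃ n, m = n + 1 := ⟨m - 1, by omega⟩
  simp only [Nat.add_sub_cancel, Fin.zero_eta, ← OrderedSimplex.simplex_succ_eq,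
    ← OrderedSimplex.zeta_apply]
  refine (OrderedSimplex.lintegral_simplex_weighted_le s hu hφ.1.aemeasurable n x).trans
    (pow_div_factorial_mul_sqrt_mul_sqrt_le_ofReal n ?_ ?_ ?_
      (setLIntegral_Ici_ofReal_le hx hu1.abs fun t _ => abs_nonneg _)
      (setLIntegral_Ici_ofReal_mul_rpow_sq_le hx hu2) hφ.lintegral_ofReal_norm_rpow_two.le)
  · exact setIntegral_nonneg measurableSet_Ioi fun t _ => abs_nonneg _
  · exact setIntegral_nonneg measurableSet_Ioi fun t ht =>
      mul_nonneg (Real.rpow_nonneg (by linarith [mem_Ioi.1 ht]) _) (sq_nonneg _)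
  · exact integral_nonneg fun t => by positivity
end

section
/- Let s ≥ 0, let n ≥ 1 be an integer, let x₀ ≥ 0, and let F : ℝ → ℂ be measurable with M := ∫_{x₀}^∞ |F(t)| dt < ∞ and W := ∫_{x₀}^∞ (1+x)^{2s} |F(x)|² dx < ∞. For x ≥ x₀ define P_n(x) := ∫_{[0,∞)^{2n}} |F(x+t₁)| · (∏_{j=1}^{2n−1} |F(x+t_j+t_{j+1})|) · |F(x+t_{2n})| dt₁ ⋯ dt_{2n}. Then ∫_{x₀}^∞ (1+x)^{2s} P_n(x)² dx ≤ M^{4n} · W. In particular, the n-th term G_n(x) = ∫_{[0,∞)^{2n}} F(x+t₁)·∏_{j=1}^{2n−1} F(x+t_j+t_{j+1})·F(x+t_{2n}) dt of the multilinear expansion of the Gelfand–Levitan–Marchenko tail satisfies ∫_{x₀}^∞ (1+x)^{2s} |G_n(x)|² dx ≤ (∫_{x₀}^∞|F|)^{4n} ∫_{x₀}^∞ (1+x)^{2s} |F(x)|² dx. -/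
/-!
Write `G = |F|`, `w(x) = (1+x)^{2s}` and `M = ∫_{x₀}^∞ G`. Integrating out one variable at a time,
`P_n(x)` is the chain integral `C_{2n}(G)(x)`, where `C_k(Φ)(x)` integrates `Φ(x+t_k)` against the
positive kernel `K_x(t) = G(x+t₁) G(x+t₁+t₂) ⋯ G(x+t_{k-1}+t_k)`. Cauchy–Schwarz against `K_x`, the
bound `∫ K_x ≤ M^{2n}` and the monotonicity of `w` give `w(x) P_n(x)² ≤ M^{2n} C_{2n}(w G²)(x)`.

The chain `C_{2n}(Φ)(x)` closes up into a cycle through `x`, so it cannot be integrated in `x` one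
variable at a time. Instead, freeing the innermost variable of two consecutive steps from the
constraint `y > x` bounds them by an operator independent of `x` and of norm at most `M²` on
`L¹(x₀, ∞)`; after `n` such reductions, `∫_{x₀}^∞ C_{2n}(Φ) ≤ M^{2n} ∫_{x₀}^∞ Φ`. Finally
`|G_n| ≤ P_n` pointwise.
-/

open MeasureTheory ENNReal

/-- `P_n(x) = ∫_{[0,∞)^{2n}} f(x+t₁) · ∏_{j=1}^{2n−1} f(x+t_j+t_{j+1}) · f(x+t_{2n}) dt`
(absolute-value chain integral of the `n`-th term of the Gelfand–Levitan–Marchenko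
multilinear expansion), as a lower Lebesgue integral. -/
noncomputable def chainP (f : ℝ → ℝ) (n : ℕ) (hn : 1 ≤ n) (x : ℝ) : ℝ≥0∞ :=
  ∫⁻ t in {t : Fin (2 * n) → ℝ | ∀ i, 0 ≤ t i},
    ENNReal.ofReal (f (x + t ⟨0, by omega⟩)) *
    (∏ j : Fin (2 * n - 1),
      ENNReal.ofReal (f (x + t ⟨j.1, by have := j.isLt; omega⟩
        + t ⟨j.1 + 1, by have := j.isLt; omega⟩))) *
    ENNReal.ofReal (f (x + t ⟨2 * n - 1, by omega⟩))

/-- `G_n(x) = ∫_{[0,∞)^{2n}} F(x+t₁) · ∏_{j=1}^{2n−1} F(x+t_j+t_{j+1}) · F(x+t_{2n}) dt`,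
the `n`-th term of the multilinear expansion of the Gelfand–Levitan–Marchenko tail. -/
noncomputable def glmTerm (F : ℝ → ℂ) (n : ℕ) (hn : 1 ≤ n) (x : ℝ) : ℂ :=
  ∫ t in {t : Fin (2 * n) → ℝ | ∀ i, 0 ≤ t i},
    F (x + t ⟨0, by omega⟩) *
    (∏ j : Fin (2 * n - 1),
      F (x + t ⟨j.1, by have := j.isLt; omega⟩ + t ⟨j.1 + 1, by have := j.isLt; omega⟩)) *
    F (x + t ⟨2 * n - 1, by omega⟩)

open Set

theorem volume_restrict_nonneg_orthant {ι : Type*} [Fintype ι] :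
    volume.restrict {t : ι → ℝ | ∀ i, 0 ≤ t i} = Measure.pi fun _ => volume.restrict (Ioi 0) := by
  have : {t : ι → ℝ | ∀ i, 0 ≤ t i} = univ.pi fun _ => Ici 0 := by
    ext t; simp [Pi.le_def]
  rw [this, volume_pi, Measure.restrict_pi_pi, Measure.restrict_congr_set Ioi_ae_eq_Ici]

theorem lintegral_pi_fin_succ {α : Type*} [MeasurableSpace α] (μ : Measure α) [SigmaFinite μ]
    {k : ℕ} {H : (Fin (k + 1) → α) → ℝ≥0∞} (hH : Measurable H) :
    ∫⁻ t, H t ∂Measure.pi (fun _ => μ) =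
      ∫⁻ a, ∫⁻ r, H (Fin.cons a r) ∂Measure.pi (fun _ => μ) ∂μ := by
  rw [← ((measurePreserving_piFinSuccAbove (fun _ => μ) 0).symm).lintegral_comp_emb
    (MeasurableEquiv.measurableEmbedding _), lintegral_prod _ ?_]
  · simp [MeasurableEquiv.piFinSuccAbove_symm_apply, Fin.insertNthEquiv]
  · exact (hH.comp (MeasurableEquiv.measurable _)).aemeasurable

theorem setLIntegral_Ioi_comp_add_right (f : ℝ → ℝ≥0∞) (a c : ℝ) :
    ∫⁻ u in Ioi a, f (u + c) = ∫⁻ y in Ioi (a + c), f y := by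
  have := (measurePreserving_add_right volume c).setLIntegral_comp_preimage_emb
    (MeasurableEquiv.addRight c).measurableEmbedding f (Ioi (a + c))
  rwa [preimage_add_const_Ioi, add_sub_cancel_right] at this

theorem setLIntegral_Ioi_comp_add_le (f : ℝ → ℝ≥0∞) {x₀ a c : ℝ} (h : x₀ ≤ a + c) :
    ∫⁻ u in Ioi a, f (u + c) ≤ ∫⁻ y in Ioi x₀, f y := by
  rw [setLIntegral_Ioi_comp_add_right]
  exact lintegral_mono_set (Ioi_subset_Ioi h)

theorem lintegral_mul_sq_le {α : Type*} [MeasurableSpace α] {μ : Measure α}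
    {K h : α → ℝ≥0∞} (hK : AEMeasurable K μ) (hh : AEMeasurable h μ) :
    (∫⁻ a, K a * h a ∂μ) ^ 2 ≤ (∫⁻ a, K a ∂μ) * ∫⁻ a, K a * h a ^ 2 ∂μ := by
  have hsqrt : ∀ a b : ℝ≥0∞, a ^ (2⁻¹ : ℝ) * b ^ (2⁻¹ : ℝ) = (a * b) ^ (2⁻¹ : ℝ) :=
    fun a b => (mul_rpow_of_nonneg a b (by norm_num)).symm
  have hpt : ∀ a, (K a * (K a * h a ^ 2)) ^ (2⁻¹ : ℝ) = K a * h a := fun a => by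
    rw [show K a * (K a * h a ^ 2) = (K a * h a) ^ 2 by ring]
    exact_mod_cast pow_rpow_inv_natCast two_ne_zero (K a * h a)
  have holder := ENNReal.lintegral_mul_norm_pow_le hK (hK.mul (hh.pow_const 2))
    (p := 2⁻¹) (q := 2⁻¹) (by norm_num) (by norm_num) (by norm_num)
  simp only [Pi.mul_apply, hsqrt, hpt] at holder
  calc (∫⁻ a, K a * h a ∂μ) ^ 2
      ≤ (((∫⁻ a, K a ∂μ) * ∫⁻ a, K a * h a ^ 2 ∂μ) ^ (2⁻¹ : ℝ)) ^ 2 := by gcongr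
    _ = (∫⁻ a, K a ∂μ) * ∫⁻ a, K a * h a ^ 2 ∂μ := by
      exact_mod_cast rpow_inv_natCast_pow two_ne_zero _

section Chain

variable (G : ℝ → ℝ≥0∞)

/-- `chainIntegral G Φ x k u = ∫_{(0,∞)^k} G(u+t₁) G(x+t₁+t₂) ⋯ G(x+t_{k-1}+t_k) Φ(x+t_k) dt`. -/
noncomputable def chainIntegral (Φ : ℝ → ℝ≥0∞) (x : ℝ) : ℕ → ℝ → ℝ≥0∞
  | 0 => Φ
  | k + 1 => fun u => ∫⁻ a in Ioi 0, G (u + a) * chainIntegral Φ x k (x + a)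

/-- Two steps of a chain, `∫∫ G(v+t) G(t+y) Φ(y) dt dy`, with `y` running over all of `(x₀, ∞)`
instead of `(x, ∞)`: this decouples the chain from its base point `x`. -/
noncomputable def hankelSq (x₀ : ℝ) (Φ : ℝ → ℝ≥0∞) (v : ℝ) : ℝ≥0∞ :=
  ∫⁻ t in Ioi 0, G (v + t) * ∫⁻ y in Ioi x₀, G (t + y) * Φ y

variable {G} {Φ : ℝ → ℝ≥0∞} {x₀ x : ℝ}

theorem lintegral_pi_chain_eq (hG : Measurable G) (hΦ : Measurable Φ) (k : ℕ) (u : ℝ) :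
    ∫⁻ t : Fin (k + 1) → ℝ, G (u + t 0) * (∏ j : Fin k, G (x + t j.castSucc + t j.succ)) *
        Φ (x + t (Fin.last k)) ∂Measure.pi (fun _ => volume.restrict (Ioi 0))
      = chainIntegral G Φ x (k + 1) u := by
  induction k generalizing u with
  | zero =>
    rw [lintegral_pi_fin_succ _ (by fun_prop)]
    simp [chainIntegral]
  | succ k ih =>
    rw [lintegral_pi_fin_succ _ (by fun_prop), chainIntegral]
    refine lintegral_congr fun a => ?_
    rw [← ih (x + a), ← lintegral_const_mul _ (by fun_prop)]
    refine lintegral_congr fun r => ?_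
    simp only [Fin.prod_univ_succ, Fin.cons_zero, Fin.cons_succ, Fin.castSucc_zero,
      ← Fin.succ_castSucc, ← Fin.succ_last]
    ring

theorem lintegral_pi_chain_eq_of_pos (hG : Measurable G) (hΦ : Measurable Φ) {m : ℕ} (hm : 0 < m)
    (u : ℝ) :
    ∫⁻ t : Fin m → ℝ, G (u + t ⟨0, hm⟩) *
        (∏ j : Fin (m - 1), G (x + t ⟨j, by omega⟩ + t ⟨j + 1, by omega⟩)) *
        Φ (x + t ⟨m - 1, by omega⟩) ∂Measure.pi (fun _ => volume.restrict (Ioi 0))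
      = chainIntegral G Φ x m u := by
  obtain ⟨k, rfl⟩ : ∃ k, m = k + 1 := ⟨m - 1, by omega⟩
  exact lintegral_pi_chain_eq hG hΦ k u

theorem chainIntegral_add (k j : ℕ) :
    chainIntegral G Φ x (k + j) = chainIntegral G (chainIntegral G Φ x j) x k := by
  induction k with
  | zero => rw [zero_add]; rfl
  | succ k ih => rw [Nat.succ_add, chainIntegral, chainIntegral, ih]

theorem chainIntegral_sq_le (hG : Measurable G) (hΦ : Measurable Φ) (m : ℕ) (u : ℝ) :
    chainIntegral G Φ x m u ^ 2
      ≤ chainIntegral G 1 x m u * chainIntegral G (fun y => Φ y ^ 2) x m u := by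
  cases m with
  | zero => simp [chainIntegral]
  | succ k =>
    rw [← lintegral_pi_chain_eq hG hΦ, ← lintegral_pi_chain_eq hG measurable_one,
      ← lintegral_pi_chain_eq hG (hΦ.pow_const 2)]
    simp only [Pi.one_apply, mul_one]
    exact lintegral_mul_sq_le (by fun_prop : Measurable _).aemeasurable
      (by fun_prop : Measurable _).aemeasurable

theorem mul_chainIntegral_le {w : ℝ → ℝ≥0∞} (hw : ∀ y, x ≤ y → w x ≤ w y) (k : ℕ) {u : ℝ}
    (hu : x ≤ u) : w x * chainIntegral G Φ x k u ≤ chainIntegral G (fun y => w y * Φ y) x k u := by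
  induction k generalizing u with
  | zero => exact mul_le_mul_left (hw u hu) _
  | succ k ih =>
    calc w x * chainIntegral G Φ x (k + 1) u
        ≤ ∫⁻ a in Ioi 0, w x * (G (u + a) * chainIntegral G Φ x k (x + a)) :=
          lintegral_const_mul_le _ _
      _ ≤ chainIntegral G (fun y => w y * Φ y) x (k + 1) u := by
          refine setLIntegral_mono' measurableSet_Ioi fun a ha => ?_
          rw [mul_left_comm]
          gcongr
          exact ih (show x ≤ x + a by linarith [mem_Ioi.1 ha])

theorem chainIntegral_one_le_pow (hG : Measurable G) (hx : x₀ ≤ x) (k : ℕ) {u : ℝ}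
    (hu : x₀ ≤ u) : chainIntegral G 1 x k u ≤ (∫⁻ y in Ioi x₀, G y) ^ k := by
  induction k generalizing u with
  | zero => simp [chainIntegral]
  | succ k ih =>
    calc chainIntegral G 1 x (k + 1) u
        ≤ ∫⁻ a in Ioi 0, G (a + u) * (∫⁻ y in Ioi x₀, G y) ^ k := by
          refine setLIntegral_mono' measurableSet_Ioi fun a ha => ?_
          rw [add_comm a]
          gcongr
          exact ih (show x₀ ≤ x + a by linarith [mem_Ioi.1 ha])
      _ = (∫⁻ a in Ioi 0, G (a + u)) * (∫⁻ y in Ioi x₀, G y) ^ k :=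
          lintegral_mul_const _ (by fun_prop)
      _ ≤ (∫⁻ y in Ioi x₀, G y) ^ (k + 1) := by
          rw [pow_succ']
          gcongr ?_ * _
          exact setLIntegral_Ioi_comp_add_le G (show x₀ ≤ 0 + u by linarith)

theorem mul_chainIntegral_sq_le (hG : Measurable G) {w : ℝ → ℝ≥0∞} (hw : ∀ y, x ≤ y → w x ≤ w y)
    (hx : x₀ ≤ x) (m : ℕ) :
    w x * chainIntegral G G x m x ^ 2
      ≤ (∫⁻ y in Ioi x₀, G y) ^ m * chainIntegral G (fun y => w y * G y ^ 2) x m x :=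
  calc w x * chainIntegral G G x m x ^ 2
      ≤ w x * (chainIntegral G 1 x m x * chainIntegral G (fun y => G y ^ 2) x m x) := by
        gcongr; exact chainIntegral_sq_le hG hG m x
    _ = chainIntegral G 1 x m x * (w x * chainIntegral G (fun y => G y ^ 2) x m x) := by ring
    _ ≤ (∫⁻ y in Ioi x₀, G y) ^ m * chainIntegral G (fun y => w y * G y ^ 2) x m x := by
        gcongr
        · exact chainIntegral_one_le_pow hG hx m hx
        · exact mul_chainIntegral_le hw m le_rfl

theorem chainIntegral_two_le_hankelSq (hx : x₀ ≤ x) (u : ℝ) :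
    chainIntegral G Φ x 2 u ≤ hankelSq G x₀ Φ u := by
  refine setLIntegral_mono' measurableSet_Ioi fun a _ => ?_
  gcongr
  calc ∫⁻ b in Ioi 0, G (x + a + b) * Φ (x + b)
      = ∫⁻ b in Ioi 0, G (a + (b + x)) * Φ (b + x) := by
        refine lintegral_congr fun b => ?_
        rw [show x + a + b = a + (b + x) by ring, add_comm x b]
    _ ≤ ∫⁻ y in Ioi x₀, G (a + y) * Φ y :=
        setLIntegral_Ioi_comp_add_le (fun y => G (a + y) * Φ y) (by linarith)

theorem hankelSq_mono : Monotone (hankelSq G x₀) :=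
  fun _ _ h _ => by unfold hankelSq; gcongr; exact h _

theorem chainIntegral_two_mul_le_iterate (hx : x₀ ≤ x) (j : ℕ) (u : ℝ) :
    chainIntegral G Φ x (2 * j) u ≤ (hankelSq G x₀)^[j] Φ u := by
  induction j generalizing u with
  | zero => rfl
  | succ j ih =>
    rw [Function.iterate_succ_apply', show 2 * (j + 1) = 2 + 2 * j by ring, chainIntegral_add]
    exact (chainIntegral_two_le_hankelSq hx u).trans (hankelSq_mono ih u)

theorem measurable_lintegral_Ioi_comp_add_mul (hG : Measurable G) (hΦ : Measurable Φ) (c : ℝ) :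
    Measurable fun t => ∫⁻ y in Ioi c, G (t + y) * Φ y :=
  ((hG.comp (measurable_fst.add measurable_snd)).mul (hΦ.comp measurable_snd)).lintegral_prod_right'

theorem measurable_hankelSq (hG : Measurable G) (hΦ : Measurable Φ) :
    Measurable (hankelSq G x₀ Φ) :=
  measurable_lintegral_Ioi_comp_add_mul hG (measurable_lintegral_Ioi_comp_add_mul hG hΦ x₀) 0

theorem measurable_iterate_hankelSq (hG : Measurable G) (hΦ : Measurable Φ) (j : ℕ) :
    Measurable ((hankelSq G x₀)^[j] Φ) := by
  induction j with
  | zero => exact hΦ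
  | succ j ih =>
    rw [Function.iterate_succ_apply']
    exact measurable_hankelSq hG ih

theorem lintegral_Ioi_lintegral_Ioi_mul_le (hG : Measurable G) {f : ℝ → ℝ≥0∞} (hf : Measurable f)
    {a b : ℝ} (hab : x₀ ≤ a + b) :
    ∫⁻ u in Ioi a, ∫⁻ v in Ioi b, G (u + v) * f v
      ≤ (∫⁻ y in Ioi x₀, G y) * ∫⁻ v in Ioi b, f v := by
  rw [lintegral_lintegral_swap
    ((hG.comp (measurable_fst.add measurable_snd)).mul (hf.comp measurable_snd)).aemeasurable]
  calc ∫⁻ v in Ioi b, ∫⁻ u in Ioi a, G (u + v) * f v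
      = ∫⁻ v in Ioi b, (∫⁻ u in Ioi a, G (u + v)) * f v :=
        lintegral_congr fun v => lintegral_mul_const _ (by fun_prop)
    _ ≤ ∫⁻ v in Ioi b, (∫⁻ y in Ioi x₀, G y) * f v := by
        refine setLIntegral_mono' measurableSet_Ioi fun v hv => ?_
        gcongr ?_ * _
        exact setLIntegral_Ioi_comp_add_le G (show x₀ ≤ a + v by linarith [mem_Ioi.1 hv])
    _ = (∫⁻ y in Ioi x₀, G y) * ∫⁻ v in Ioi b, f v := lintegral_const_mul _ hf

theorem lintegral_hankelSq_le (hG : Measurable G) (hΦ : Measurable Φ) :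
    ∫⁻ v in Ioi x₀, hankelSq G x₀ Φ v ≤ (∫⁻ y in Ioi x₀, G y) ^ 2 * ∫⁻ y in Ioi x₀, Φ y := by
  calc ∫⁻ v in Ioi x₀, hankelSq G x₀ Φ v
      ≤ (∫⁻ y in Ioi x₀, G y) * ∫⁻ t in Ioi 0, ∫⁻ y in Ioi x₀, G (t + y) * Φ y :=
        lintegral_Ioi_lintegral_Ioi_mul_le hG (measurable_lintegral_Ioi_comp_add_mul hG hΦ x₀)
          (by linarith)
    _ ≤ (∫⁻ y in Ioi x₀, G y) * ((∫⁻ y in Ioi x₀, G y) * ∫⁻ y in Ioi x₀, Φ y) := by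
        gcongr
        exact lintegral_Ioi_lintegral_Ioi_mul_le hG hΦ (by linarith)
    _ = (∫⁻ y in Ioi x₀, G y) ^ 2 * ∫⁻ y in Ioi x₀, Φ y := by ring

theorem lintegral_iterate_hankelSq_le (hG : Measurable G) (hΦ : Measurable Φ) (j : ℕ) :
    ∫⁻ v in Ioi x₀, (hankelSq G x₀)^[j] Φ v
      ≤ (∫⁻ y in Ioi x₀, G y) ^ (2 * j) * ∫⁻ y in Ioi x₀, Φ y := by
  induction j with
  | zero => simp
  | succ j ih =>
    rw [Function.iterate_succ_apply']
    calc ∫⁻ v in Ioi x₀, hankelSq G x₀ ((hankelSq G x₀)^[j] Φ) v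
        ≤ (∫⁻ y in Ioi x₀, G y) ^ 2 * ∫⁻ v in Ioi x₀, (hankelSq G x₀)^[j] Φ v :=
          lintegral_hankelSq_le hG (measurable_iterate_hankelSq hG hΦ j)
      _ ≤ (∫⁻ y in Ioi x₀, G y) ^ 2 * ((∫⁻ y in Ioi x₀, G y) ^ (2 * j) * ∫⁻ y in Ioi x₀, Φ y) := by
          gcongr
      _ = (∫⁻ y in Ioi x₀, G y) ^ (2 * (j + 1)) * ∫⁻ y in Ioi x₀, Φ y := by ring

theorem lintegral_mul_chainIntegral_sq_le (hG : Measurable G) {w : ℝ → ℝ≥0∞} (hw : Measurable w)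
    (hw_mono : MonotoneOn w (Ici x₀)) (n : ℕ) :
    ∫⁻ x in Ioi x₀, w x * chainIntegral G G x (2 * n) x ^ 2
      ≤ (∫⁻ y in Ioi x₀, G y) ^ (4 * n) * ∫⁻ y in Ioi x₀, w y * G y ^ 2 := by
  set M := ∫⁻ y in Ioi x₀, G y
  have hΦ : Measurable fun y => w y * G y ^ 2 := hw.mul (hG.pow_const 2)
  have hpt : ∀ x ∈ Ioi x₀, w x * chainIntegral G G x (2 * n) x ^ 2
      ≤ M ^ (2 * n) * (hankelSq G x₀)^[n] (fun y => w y * G y ^ 2) x := fun x hx => by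
    have hx : x₀ ≤ x := le_of_lt hx
    refine (mul_chainIntegral_sq_le hG (fun y hy => hw_mono hx (hx.trans hy) hy) hx _).trans ?_
    gcongr
    exact chainIntegral_two_mul_le_iterate hx n x
  calc ∫⁻ x in Ioi x₀, w x * chainIntegral G G x (2 * n) x ^ 2
      ≤ ∫⁻ x in Ioi x₀, M ^ (2 * n) * (hankelSq G x₀)^[n] (fun y => w y * G y ^ 2) x :=
        setLIntegral_mono' measurableSet_Ioi hpt
    _ = M ^ (2 * n) * ∫⁻ x in Ioi x₀, (hankelSq G x₀)^[n] (fun y => w y * G y ^ 2) x :=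
        lintegral_const_mul _ (measurable_iterate_hankelSq hG hΦ n)
    _ ≤ M ^ (2 * n) * (M ^ (2 * n) * ∫⁻ y in Ioi x₀, w y * G y ^ 2) := by
        gcongr; exact lintegral_iterate_hankelSq_le hG hΦ n
    _ = M ^ (4 * n) * ∫⁻ y in Ioi x₀, w y * G y ^ 2 := by ring

end Chain

theorem chainP_eq_chainIntegral {f : ℝ → ℝ} (hf : Measurable f) (n : ℕ) (hn : 1 ≤ n) (x : ℝ) :
    chainP f n hn x = chainIntegral (fun y => ENNReal.ofReal (f y)) (fun y => ENNReal.ofReal (f y))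
      x (2 * n) x := by
  rw [chainP, volume_restrict_nonneg_orthant]
  exact lintegral_pi_chain_eq_of_pos hf.ennreal_ofReal hf.ennreal_ofReal (by omega) x

theorem ofReal_norm_glmTerm_le_chainP (F : ℝ → ℂ) (n : ℕ) (hn : 1 ≤ n) (x : ℝ) :
    ENNReal.ofReal ‖glmTerm F n hn x‖ ≤ chainP (fun t => ‖F t‖) n hn x := by
  refine ENNReal.ofReal_le_of_le_toReal ((norm_integral_le_lintegral_norm _).trans_eq ?_)
  congr 1
  refine lintegral_congr fun t => ?_
  simp only [ofReal_norm, enorm_eq_nnnorm, nnnorm_mul, nnnorm_prod, ENNReal.coe_mul,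
    ENNReal.ofNNReal_finsetProd]

theorem monotoneOn_ofReal_one_add_rpow {s : ℝ} (hs : 0 ≤ s) :
    MonotoneOn (fun x : ℝ => ENNReal.ofReal ((1 + x) ^ s)) (Ici (-1)) :=
  fun a ha _ _ hab => ENNReal.ofReal_le_ofReal
    (Real.rpow_le_rpow (by linarith [mem_Ici.1 ha]) (by linarith) hs)

theorem ofReal_setIntegral_one_add_rpow_mul_norm_sq {E : Type*} [NormedAddCommGroup E]
    {F : ℝ → E} {s x₀ : ℝ} (hx₀ : -1 ≤ x₀)
    (hW : IntegrableOn (fun x => (1 + x) ^ s * ‖F x‖ ^ 2) (Ioi x₀)) :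
    ENNReal.ofReal (∫ x in Ioi x₀, (1 + x) ^ s * ‖F x‖ ^ 2)
      = ∫⁻ x in Ioi x₀, ENNReal.ofReal ((1 + x) ^ s) * ENNReal.ofReal ‖F x‖ ^ 2 := by
  have hweight : ∀ x ∈ Ioi x₀, 0 ≤ (1 + x) ^ s := fun x hx =>
    Real.rpow_nonneg (by linarith [mem_Ioi.1 hx]) _
  rw [ofReal_integral_eq_lintegral_ofReal hW ((ae_restrict_iff' measurableSet_Ioi).2
    (ae_of_all _ fun x hx => mul_nonneg (hweight x hx) (by positivity)))]
  refine setLIntegral_congr_fun measurableSet_Ioi fun x hx => ?_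
  rw [ENNReal.ofReal_mul (hweight x hx), ENNReal.ofReal_pow (norm_nonneg _)]

/-- With `M = ∫_{x₀}^∞ |F| < ∞` and
`W = ∫_{x₀}^∞ (1+x)^{2s}|F(x)|² dx < ∞`, one has
`∫_{x₀}^∞ (1+x)^{2s} P_n(x)² dx ≤ M^{4n} W`; in particular the `n`-th
Gelfand–Levitan–Marchenko term satisfies
`∫_{x₀}^∞ (1+x)^{2s} |G_n(x)|² dx ≤ M^{4n} W`. -/
theorem glm_term_weighted_bound (s : ℝ) (hs : 0 ≤ s) (n : ℕ) (hn : 1 ≤ n)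
    (x₀ : ℝ) (hx₀ : 0 ≤ x₀) (F : ℝ → ℂ) (hF : Measurable F)
    (hM : IntegrableOn F (Set.Ioi x₀))
    (hW : IntegrableOn (fun x : ℝ => (1 + x) ^ (2 * s) * ‖F x‖ ^ 2)
      (Set.Ioi x₀)) :
    (∫⁻ x in Set.Ioi x₀, ENNReal.ofReal ((1 + x) ^ (2 * s)) *
        chainP (fun t => ‖F t‖) n hn x ^ 2)
      ≤ ENNReal.ofReal ((∫ t in Set.Ioi x₀, ‖F t‖) ^ (4 * n) *
          ∫ x in Set.Ioi x₀, (1 + x) ^ (2 * s) * ‖F x‖ ^ 2) ∧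
    (∫⁻ x in Set.Ioi x₀, ENNReal.ofReal ((1 + x) ^ (2 * s)) *
        ENNReal.ofReal (‖glmTerm F n hn x‖ ^ 2))
      ≤ ENNReal.ofReal ((∫ t in Set.Ioi x₀, ‖F t‖) ^ (4 * n) *
          ∫ x in Set.Ioi x₀, (1 + x) ^ (2 * s) * ‖F x‖ ^ 2) := by
  have hM' : ENNReal.ofReal (∫ t in Ioi x₀, ‖F t‖) = ∫⁻ t in Ioi x₀, ENNReal.ofReal ‖F t‖ :=
    ofReal_integral_eq_lintegral_ofReal hM.norm (ae_of_all _ fun _ => norm_nonneg _)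
  have hmono : MonotoneOn (fun x : ℝ => ENNReal.ofReal ((1 + x) ^ (2 * s))) (Ici x₀) :=
    (monotoneOn_ofReal_one_add_rpow (by linarith)).mono (Ici_subset_Ici.2 (by linarith))
  refine ⟨?chain, (lintegral_mono fun x => ?_).trans ?chain⟩
  case chain =>
    rw [ENNReal.ofReal_mul (by positivity), ENNReal.ofReal_pow (by positivity), hM',
      ofReal_setIntegral_one_add_rpow_mul_norm_sq (by linarith) hW]
    simp_rw [chainP_eq_chainIntegral hF.norm]
    exact lintegral_mul_chainIntegral_sq_le hF.norm.ennreal_ofReal (by fun_prop) hmono n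
  rw [ENNReal.ofReal_pow (norm_nonneg _)]
  gcongr
  exact ofReal_norm_glmTerm_le_chainP F n hn x
end
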